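/- arXiv:1912.03345 — 3 statements merged into one kernel-verified Lean document; each statement's English description precedes it below -/
import Mathlib

section
/- The word 'babab' is an obstruction for the Fibonacci word: it is not a factor of the Fibonacci word, but both 'baba' and 'abab' are factors. -/
/-- The factor of the infinite word `W` of length `n` starting at position `i`. -/
def factorAt {α : Type*} (W : ℕ → α) (i n : ℕ) : List α :=
  (List.range n).map (fun j => W (i + j))

/-- `v` is a (contiguous) factor of the infinite word `W`. -/
def IsFactor {α : Type*} (W : ℕ → α) (v : List α) : Prop :=
  ∃ i, factorAt W i v.length = v

/-- `v` is an obstruction for `W`: not a factor, but all proper factors of `v` are factors. -/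
def IsObstructionW {α : Type*} (W : ℕ → α) (v : List α) : Prop :=
  ¬ IsFactor W v ∧ ∀ u : List α, u <:+: v → u ≠ v → IsFactor W u

/-- Cogrowth: the number of obstructions of length at most `n`. -/
noncomputable def cogrowth {α : Type*} (W : ℕ → α) (n : ℕ) : ℕ :=
  {v : List α | IsObstructionW W v ∧ v.length ≤ n}.ncard

def UniformlyRecurrent {α : Type*} (W : ℕ → α) : Prop :=
  ∀ u : List α, IsFactor W u → ∃ C, ∀ v : List α, IsFactor W v → v.length = C → u <:+: v

def EventuallyPeriodic {α : Type*} (W : ℕ → α) : Prop :=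
  ∃ p, 0 < p ∧ ∃ N, ∀ i, N ≤ i → W (i + p) = W i

/-- Fibonacci finite words: u₀ = b = ff, u₁ = a = tt, u_{k+2} = u_{k+1} ++ u_k. -/
def fibWordAux : ℕ → List Bool
  | 0 => [false]
  | 1 => [true]
  | (k+2) => fibWordAux (k+1) ++ fibWordAux k

/-- The infinite Fibonacci word, limit of the `fibWordAux` (letter `a` = `true`, `b` = `false`). -/
def fibWord (n : ℕ) : Bool := (fibWordAux (n+2)).getD n false

/-!
Every factor of the Fibonacci word is a factor of some `u_{k+1}`, hence of `u_{k+4} u_4`, so it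
suffices that `babab` is not a factor of any `u_{k+4} u_4` (checked directly for `k = 0, 1`).
Since `u_{k+6} u_4 = u_{k+5} (u_{k+4} u_4)` and `u_{k+4} u_4` begins with `u_4 = abaab`, a factor
of length 5 of `u_{k+6} u_4` is a factor of `u_{k+5} u_4` or of `u_{k+4} u_4`.
-/

theorem factorAt_isInfix {α : Type*} {W : ℕ → α} {L : List α} {i n : ℕ}
    (hlen : i + n ≤ L.length) (hW : ∀ (j : ℕ) (hj : j < L.length), L[j] = W j) :
    factorAt W i n <:+: L := by
  have h : factorAt W i n = (L.drop i).take n := by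
    apply List.ext_getElem
    · simp [factorAt]; omega
    · intro j hj _
      simp only [factorAt, List.length_map, List.length_range] at hj
      simp [factorAt, hW]
  exact h ▸ (List.take_prefix _ _).isInfix.trans (List.drop_suffix _ _).isInfix

theorem List.IsInfix.infix_append_take_or_infix {α : Type*} {l xs ys : List α} {n : ℕ}
    (h : l <:+: xs ++ ys) (hl : l.length ≤ n) : l <:+: xs ++ ys.take n ∨ l <:+: ys := by
  rcases List.infix_append_iff.mp h with h | h | ⟨l₁, l₂, rfl, h₁, h₂⟩
  · exact .inl (List.infix_append_of_infix_left h)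
  · exact .inr h
  · refine .inl (List.infix_append_iff.mpr (.inr (.inr ⟨l₁, l₂, rfl, h₁, ?_⟩)))
    rw [List.prefix_iff_eq_take] at h₂ ⊢
    rw [List.take_take, Nat.min_eq_left (by simp at hl; omega)]
    exact h₂

theorem length_fibWordAux : ∀ k, (fibWordAux k).length = Nat.fib (k + 1)
  | 0 => rfl
  | 1 => rfl
  | k + 2 => by
    rw [fibWordAux, List.length_append, length_fibWordAux (k + 1), length_fibWordAux k,
      Nat.fib_add_two (n := k + 1)]
    ring

theorem le_length_fibWordAux (n : ℕ) : n ≤ (fibWordAux (n + 1)).length := by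
  rw [length_fibWordAux]
  have h₁ := Nat.le_fib_add_one (n + 1)
  have h₂ := Nat.fib_le_fib_succ (n := n + 1)
  omega

theorem fibWordAux_succ_prefix {k m : ℕ} (h : k ≤ m) :
    fibWordAux (k + 1) <+: fibWordAux (m + 1) := by
  induction m, h using Nat.le_induction with
  | base => exact List.prefix_rfl
  | succ m _ ih => exact ih.trans (List.prefix_append _ _)

theorem getElem_fibWordAux {k n : ℕ} (hn : n < (fibWordAux (k + 1)).length) :
    (fibWordAux (k + 1))[n] = fibWord n := by
  have hn' : n < (fibWordAux (n + 2)).length := le_length_fibWordAux (n + 1)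
  rw [fibWord, List.getD_eq_getElem _ _ hn',
    (fibWordAux_succ_prefix (le_max_left k (n + 1))).getElem hn,
    (fibWordAux_succ_prefix (le_max_right k (n + 1))).getElem hn']

theorem IsFactor.exists_isInfix_fibWordAux {v : List Bool} (h : IsFactor fibWord v) :
    ∃ k, v <:+: fibWordAux (k + 1) := by
  obtain ⟨i, hi⟩ := h
  set n := v.length
  exact ⟨i + n, hi ▸ factorAt_isInfix (le_length_fibWordAux _) fun _ _ => getElem_fibWordAux _⟩

theorem not_babab_infix_fibWordAux_append : ∀ k,
    ¬ [false, true, false, true, false] <:+: fibWordAux (k + 4) ++ fibWordAux 4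
  | 0 => by decide
  | 1 => by decide
  | k + 2 => fun h => by
    have hu₄ : (fibWordAux (k + 4) ++ fibWordAux 4).take 5 = fibWordAux 4 := by
      have hpre : fibWordAux 4 <+: fibWordAux (k + 4) := fibWordAux_succ_prefix (by omega)
      exact (List.prefix_iff_eq_take.mp (hpre.trans (List.prefix_append _ _))).symm
    rw [show k + 2 + 4 = (k + 4) + 2 from rfl, fibWordAux, List.append_assoc] at h
    rcases h.infix_append_take_or_infix (n := 5) le_rfl with h | h
    · exact not_babab_infix_fibWordAux_append (k + 1) (hu₄ ▸ h)
    · exact not_babab_infix_fibWordAux_append k h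

theorem fibWord_babab_obstruction :
    ¬ IsFactor fibWord [false, true, false, true, false] ∧
      IsFactor fibWord [false, true, false, true] ∧
      IsFactor fibWord [true, false, true, false] := by
  refine ⟨fun h => ?_, ⟨4, by decide⟩, ⟨3, by decide⟩⟩
  obtain ⟨k, hk⟩ := h.exists_isInfix_fibWordAux
  exact not_babab_infix_fibWordAux_append k <|
    hk.trans ((fibWordAux_succ_prefix (Nat.le_add_right k 3)).isInfix.trans List.infix_append_left)
end

section
/- Let W be a periodic infinite sequence over a finite alphabet, with period word u (i.e., W = uuu...). Then the set of obstructions of W is finite; in fact every obstruction of W has length at most 2|u|+1. -/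
/-!
If a word `v` of length `n ≥ p + 2` is not a factor of a `p`-periodic word `W` while its prefix
and suffix of length `n - 1` are, say at positions `i` and `j`, then the windows of `W` at `i + 1`
and at `j` agree on `n - 2 ≥ p` letters, hence everywhere by periodicity. The letter following
the prefix occurrence at `i` is then the last letter of `v`, so `v` occurs at `i`, a contradiction.
Obstructions of `u^∞` therefore have length at most `|u| + 1`, and over a finite alphabet there are
only finitely many such words.
-/

section

variable {α : Type*}

theorem factorAt_eq_iff (W : ℕ → α) (i : ℕ) (v : List α) :
    factorAt W i v.length = v ↔ ∀ k (hk : k < v.length), W (i + k) = v[k] := by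
  simp [List.ext_getElem_iff, factorAt]

theorem isFactor_iff (W : ℕ → α) (v : List α) :
    IsFactor W v ↔ ∃ i, ∀ k (hk : k < v.length), W (i + k) = v[k] := by
  simp only [IsFactor, factorAt_eq_iff]

theorem IsObstructionW.isFactor_of_length_lt {W : ℕ → α} {v w : List α}
    (hv : IsObstructionW W v) (hw : w <:+: v) (hlen : w.length < v.length) : IsFactor W w :=
  hv.2 w hw fun h => hlen.ne (congrArg List.length h)

theorem Function.Periodic.apply_add_eq_of_forall_lt {f : ℕ → α} {p : ℕ} (hper : Periodic f p)
    (hp : 0 < p) {a b : ℕ} (h : ∀ k < p, f (a + k) = f (b + k)) (k : ℕ) :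
    f (a + k) = f (b + k) := by
  induction k using Nat.strong_induction_on with
  | _ k ih =>
    rcases lt_or_ge k p with hk | hk
    · exact h k hk
    · obtain ⟨k, rfl⟩ := Nat.exists_eq_add_of_le' hk
      rw [← add_assoc, ← add_assoc, hper, hper]
      exact ih k (by omega)

theorem IsObstructionW.length_le_of_periodic {W : ℕ → α} {p : ℕ} (hper : Function.Periodic W p)
    (hp : 0 < p)     {v : List α} (hv : IsObstructionW W v) : v.length ≤ p + 1 := by
  by_contra! hlong
  obtain ⟨i, hi⟩ := (isFactor_iff W _).1 <|
    hv.isFactor_of_length_lt v.dropLast_prefix.isInfix (by simp only [List.length_dropLast]; omega)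
  obtain ⟨j, hj⟩ := (isFactor_iff W _).1 <|
    hv.isFactor_of_length_lt v.tail_suffix.isInfix (by simp only [List.length_tail]; omega)
  simp only [List.length_dropLast, List.getElem_dropLast] at hi
  simp only [List.length_tail, List.getElem_tail] at hj
  have hshift : ∀ k, W (i + 1 + k) = W (j + k) :=
    hper.apply_add_eq_of_forall_lt hp fun k hk => by
      rw [add_assoc, add_comm 1 k, hi (k + 1) (by omega), hj k (by omega)]
  refine hv.1 ((isFactor_iff W v).2 ⟨i, fun k hk => ?_⟩)
  rcases lt_or_ge k (v.length - 1) with hk' | hk'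
  · exact hi k hk'
  · obtain rfl : k = v.length - 2 + 1 := by omega
    rw [← add_assoc, add_right_comm, hshift, hj _ (by omega)]

end

theorem periodic_obstructions_finite {α : Type*} [Fintype α] [Inhabited α]
    (u : List α) (hu : u ≠ []) :
    {v : List α | IsObstructionW (fun i => u.getD (i % u.length) default) v}.Finite ∧
    ∀ v : List α, IsObstructionW (fun i => u.getD (i % u.length) default) v →
      v.length ≤ 2 * u.length + 1 := by
  have hper : Function.Periodic (fun i => u.getD (i % u.length) default) u.length :=
    fun m => by simp only [Nat.add_mod_right]
  have hlen (v : List α) (hv : IsObstructionW (fun i => u.getD (i % u.length) default) v) :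
      v.length ≤ u.length + 1 :=
    hv.length_le_of_periodic hper (List.length_pos_iff.2 hu)
  exact ⟨(List.finite_length_le α (u.length + 1)).subset hlen,
    fun v hv => (hlen v hv).trans (by omega)⟩
end

section
/- Let A = k⟨X⟩/I be a finitely presented associative algebra with finite generating set X and ideal I generated by elements of degree at most m, and let N ≥ m. If A has no obstructions of length in the interval [N, 2N], then I has a finite Gröbner basis (with respect to the degree-lexicographic order); in particular the set of obstructions of A is finite. -/
noncomputable section

variable (k : Type) [Field k] (X : Type) [Fintype X] [LinearOrder X]

/-- The free associative algebra k⟨X⟩, realized as the monoid algebra of the free monoid. -/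
abbrev FreeAlg := MonoidAlgebra k (FreeMonoid X)

/-- The degree-lexicographic strict order on monomials. -/
def DegLexLT (u v : FreeMonoid X) : Prop :=
  u.length < v.length ∨ (u.length = v.length ∧ List.Lex (· < ·) u.toList v.toList)

/-- `w` is the leading monomial of `f` with respect to deglex. -/
def IsLeadingMonomial (f : FreeAlg k X) (w : FreeMonoid X) : Prop :=
  w ∈ f.coeff.support ∧ ∀ u ∈ f.coeff.support, u ≠ w → DegLexLT X u w

/-- `w` is `I`-reducible: it is the leading monomial of some element of `I`. -/
def IsReducible (I : TwoSidedIdeal (FreeAlg k X)) (w : FreeMonoid X) : Prop :=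
  ∃ f ∈ I, IsLeadingMonomial k X f w

/-- `w` is an obstruction: `I`-reducible, but all its proper subwords are `I`-irreducible. -/
def IsObstructionA (I : TwoSidedIdeal (FreeAlg k X)) (w : FreeMonoid X) : Prop :=
  IsReducible k X I w ∧
    ∀ u : FreeMonoid X, u.toList <:+: w.toList → u ≠ w → ¬ IsReducible k X I u

/-- `G` is a Gröbner basis of `I`: `G ⊆ I`, and the leading monomial of every nonzero
element of `I` contains the leading monomial of some element of `G` as a subword. -/
def IsGroebnerBasis (I : TwoSidedIdeal (FreeAlg k X)) (G : Set (FreeAlg k X)) : Prop :=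
  G ⊆ (I : Set (FreeAlg k X)) ∧
    ∀ f ∈ I, f ≠ 0 → ∃ g ∈ G, ∃ wf wg : FreeMonoid X,
      IsLeadingMonomial k X f wf ∧ IsLeadingMonomial k X g wg ∧ wg.toList <:+: wf.toList

end

/-!
Suppose some obstruction is longer than `2N` and let `o` be the deglex-smallest one; then every
obstruction below `o` is shorter than `N`. Pick monic `g t ∈ I` with leading word `t` for these
obstructions `t`. Reducing leading words shows that every element of `I` supported below a word
`V ≤ o` is a combination of products `a * g t * b` with all words `a t b < V`. This applies to the
defining relations (of degree `≤ m ≤ N`) and to the ambiguities of two reducers, whose words have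
length `< 2N < |o|`. Bergman's diamond-lemma argument then gives every element of `I` such a
representation with all words `a t b` at most its leading word. No word `a t b` equals `o`, since
`t` would be a reducible proper factor of `o`, so no element of `I` has leading word `o`: a
contradiction. Hence all obstructions are shorter than `N`, there are finitely many of them, and
representatives of them form a finite Gröbner basis.
-/

open FreeMonoid MonoidAlgebra

theorem List.Lex.append_right_of_length_eq {α : Type*} {r : α → α → Prop} {u v : List α}
    (h : List.Lex r u v) (hl : u.length = v.length) (c : List α) :
    List.Lex r (u ++ c) (v ++ c) := by
  induction h with
  | nil => simp at hl
  | cons _ ih => exact .cons (ih (by simpa using hl))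
  | rel h => exact .rel h

namespace FreeMonoid

section Words

variable {α : Type*}

theorem mul_eq_mul_iff {a b c d : FreeMonoid α} :
    a * b = c * d ↔ (∃ e, c = a * e ∧ b = e * d) ∨ ∃ e, a = c * e ∧ d = e * b :=
  List.append_eq_append_iff

theorem isInfix_iff {u w : FreeMonoid α} : u.toList <:+: w.toList ↔ ∃ a b, a * u * b = w :=
  Iff.rfl

theorem length_lt_of_isInfix {u w : FreeMonoid α} (h : u.toList <:+: w.toList) (hne : u ≠ w) :
    u.length < w.length :=
  h.length_le.lt_of_ne fun hl => hne (toList.injective (h.eq_of_length hl))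

theorem occurrence_cases_left {t₁ b₁ u t₂ b₂ : FreeMonoid α}
    (h : t₁ * b₁ = u * t₂ * b₂) :
    (∃ c, u = t₁ * c ∧ b₁ = c * t₂ * b₂) ∨
      ∃ b b₁' b₂', b₁ = b₁' * b ∧ b₂ = b₂' * b ∧ t₁ * b₁' = u * t₂ * b₂' ∧
        (t₁ * b₁').length ≤ t₁.length + t₂.length := by
  rw [mul_assoc, mul_eq_mul_iff] at h
  rcases h with ⟨c, rfl, rfl⟩ | ⟨e, rfl, h⟩
  · exact Or.inl ⟨c, rfl, by rw [mul_assoc]⟩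
  right
  rcases mul_eq_mul_iff.1 h with ⟨f, rfl, rfl⟩ | ⟨f, rfl, rfl⟩
  · exact ⟨b₁, 1, f, by rw [one_mul], rfl, by simp [mul_assoc], by simp⟩
  · exact ⟨b₂, f, 1, rfl, by rw [one_mul], by simp [mul_assoc], by simp⟩

theorem occurrence_cases {a₁ t₁ b₁ a₂ t₂ b₂ : FreeMonoid α}
    (h : a₁ * t₁ * b₁ = a₂ * t₂ * b₂) :
    (∃ c, a₂ = a₁ * t₁ * c ∧ b₁ = c * t₂ * b₂) ∨ (∃ c, a₁ = a₂ * t₂ * c ∧ b₂ = c * t₁ * b₁) ∨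
      ∃ a b a₁' b₁' a₂' b₂', a₁ = a * a₁' ∧ b₁ = b₁' * b ∧ a₂ = a * a₂' ∧ b₂ = b₂' * b ∧
        a₁' * t₁ * b₁' = a₂' * t₂ * b₂' ∧ (a₁' * t₁ * b₁').length ≤ t₁.length + t₂.length := by
  rw [mul_assoc, mul_assoc, mul_eq_mul_iff] at h
  rcases h with ⟨u, rfl, h⟩ | ⟨u, rfl, h⟩
  · rcases occurrence_cases_left (h.trans (mul_assoc _ _ _).symm) with
      ⟨c, rfl, rfl⟩ | ⟨b, b₁', b₂', hb₁, hb₂, he, hl⟩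
    · exact Or.inl ⟨c, by rw [mul_assoc], rfl⟩
    · exact Or.inr (Or.inr ⟨a₁, b, 1, b₁', u, b₂', by rw [mul_one], hb₁, rfl, hb₂,
        by rw [one_mul, he], by rwa [one_mul]⟩)
  · rcases occurrence_cases_left (h.trans (mul_assoc _ _ _).symm) with
      ⟨c, rfl, rfl⟩ | ⟨b, b₂', b₁', hb₂, hb₁, he, hl⟩
    · exact Or.inr (Or.inl ⟨c, by rw [mul_assoc], rfl⟩)
    · refine Or.inr (Or.inr ⟨a₂, b, u, b₁', 1, b₂', rfl, hb₁, by rw [mul_one], hb₂,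
        by rw [one_mul, he], ?_⟩)
      rw [← he, add_comm]; exact hl

end Words

section DegLex

variable {X : Type} [LinearOrder X]

abbrev degLexOrder : LinearOrder (FreeMonoid X) :=
  LinearOrder.lift' (fun u => toLex (u.length, u.toList))
    fun _ _ h => toList.injective (congrArg (fun p => (ofLex p).2) h)

attribute [local instance] degLexOrder

theorem degLexLT_iff_lt {u v : FreeMonoid X} : DegLexLT X u v ↔ u < v := by
  show _ ↔ toLex (u.length, u.toList) < toLex (v.length, v.toList)
  rw [Prod.Lex.toLex_lt_toLex, DegLexLT, ← List.lt_iff_lex_lt]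
  rfl

theorem lt_of_length_lt {u v : FreeMonoid X} (h : u.length < v.length) : u < v :=
  degLexLT_iff_lt.1 (Or.inl h)

theorem length_le_of_le {u v : FreeMonoid X} (h : u ≤ v) : u.length ≤ v.length := by
  contrapose! h
  exact lt_of_length_lt h

theorem finite_Iio [Finite X] (u : FreeMonoid X) : (Set.Iio u).Finite :=
  ((List.finite_length_le X u.length).image ofList).subset
    fun v hv => ⟨v.toList, length_le_of_le hv.le, rfl⟩

theorem wellFoundedLT [Finite X] : WellFoundedLT (FreeMonoid X) :=
  StrictMono.wellFoundedLT (f := fun u => (Set.Iio u).ncard)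
    fun _ v h => Set.ncard_lt_ncard (Set.Iio_ssubset_Iio h) (finite_Iio v)

theorem le_of_isInfix {u v : FreeMonoid X} (h : u.toList <:+: v.toList) : u ≤ v := by
  rcases eq_or_ne u v with rfl | hne
  exacts [le_rfl, (lt_of_length_lt (length_lt_of_isInfix h hne)).le]

theorem strictMono_mul_mul (a b : FreeMonoid X) : StrictMono fun u => a * u * b := by
  intro u v h
  rw [← degLexLT_iff_lt] at h ⊢
  rcases h with h | ⟨e, l⟩
  · left; simp only [length_mul]; omega
  · refine Or.inr ⟨by simp [e], ?_⟩
    simp only [toList_mul]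
    exact (l.append_left _ a.toList).append_right_of_length_eq (by simpa [length] using e) _

end DegLex

end FreeMonoid

theorem MonoidAlgebra.mul_mul_mem_of_forall_single {R G : Type*} [CommSemiring R] [Monoid G]
    (M : Submodule R (MonoidAlgebra R G)) {x D y : MonoidAlgebra R G}
    (h : ∀ u ∈ D.coeff.support, x * single u 1 * y ∈ M) : x * D * y ∈ M := by
  rw [← sum_coeff_single D, Finsupp.sum, Finset.mul_sum, Finset.sum_mul]
  refine Submodule.sum_mem _ fun u hu => ?_
  rw [← mul_one (D.coeff u), ← smul_single', mul_smul_comm, smul_mul_assoc]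
  exact M.smul_mem _ (h u hu)

namespace FreeAlg

attribute [local instance] FreeMonoid.degLexOrder FreeMonoid.wellFoundedLT

variable {k : Type} [Field k] {X : Type}

theorem single_mul_one (a b : FreeMonoid X) :
    (single (a * b) 1 : FreeAlg k X) = single a 1 * single b 1 := by
  rw [single_mul_single, one_mul]

/-- With `s = Set.Iio w`, the elements having a representation below `w` in the sense of Bergman's
diamond lemma. -/
noncomputable def reducerSpan (g : FreeMonoid X → FreeAlg k X) (O s : Set (FreeMonoid X)) :
    Submodule k (FreeAlg k X) :=
  Submodule.span k {x | ∃ t ∈ O, ∃ a b, a * t * b ∈ s ∧ single a 1 * g t * single b 1 = x}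

variable {g : FreeMonoid X → FreeAlg k X} {O : Set (FreeMonoid X)}

theorem reducerSpan_mono {s s' : Set (FreeMonoid X)} (h : s ⊆ s') :
    reducerSpan g O s ≤ reducerSpan g O s' :=
  Submodule.span_mono fun _ ⟨t, ht, a, b, hs, hx⟩ => ⟨t, ht, a, b, h hs, hx⟩

theorem single_mul_mul_single_mem_reducerSpan {s : Set (FreeMonoid X)} {t : FreeMonoid X}
    (ht : t ∈ O) {a b : FreeMonoid X} (hs : a * t * b ∈ s) :
    single a 1 * g t * single b 1 ∈ reducerSpan g O s :=
  Submodule.subset_span ⟨t, ht, a, b, hs, rfl⟩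

theorem single_mul_mul_single_mem_reducerSpan_image {s : Set (FreeMonoid X)} {x : FreeAlg k X}
    (hx : x ∈ reducerSpan g O s) (a b : FreeMonoid X) :
    single a 1 * x * single b 1 ∈ reducerSpan g O ((fun w => a * w * b) '' s) := by
  let L : FreeAlg k X →ₗ[k] FreeAlg k X :=
    LinearMap.mulLeft k (single a 1) ∘ₗ LinearMap.mulRight k (single b 1)
  have hL : reducerSpan g O s ≤ (reducerSpan g O ((fun w => a * w * b) '' s)).comap L := by
    refine Submodule.span_le.2 fun _ ⟨t, ht, a', b', hs, hx⟩ => ?_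
    subst hx
    have e : L (single a' 1 * g t * single b' 1) = single (a * a') 1 * g t * single (b' * b) 1 := by
      simp only [L, LinearMap.comp_apply, LinearMap.mulLeft_apply, LinearMap.mulRight_apply,
        single_mul_one, mul_assoc]
    rw [SetLike.mem_coe, Submodule.mem_comap, e]
    exact single_mul_mul_single_mem_reducerSpan ht ⟨_, hs, by simp only [mul_assoc]⟩
  simpa [L, mul_assoc] using hL hx

theorem mem_reducerSpan_univ_of_mem_span {S : Set (FreeAlg k X)}
    (hS : S ⊆ reducerSpan g O Set.univ) {x : FreeAlg k X} (hx : x ∈ TwoSidedIdeal.span S) :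
    x ∈ reducerSpan g O Set.univ := by
  have hconj : ∀ y ∈ reducerSpan g O Set.univ, ∀ a b : FreeMonoid X,
      single a 1 * y * single b 1 ∈ reducerSpan g O Set.univ := fun y hy a b =>
    reducerSpan_mono (Set.subset_univ _) (single_mul_mul_single_mem_reducerSpan_image hy a b)
  induction hx using TwoSidedIdeal.span_induction with
  | mem x hx => exact hS hx
  | zero => exact zero_mem _
  | add x y _ _ hx hy => exact add_mem hx hy
  | neg x _ hx => exact neg_mem hx
  | left_absorb y x _ hx =>
    simpa using mul_mul_mem_of_forall_single _ (x := 1) (D := y) (y := x)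
      fun u _ => by simpa [← one_def] using hconj x hx u 1
  | right_absorb y x _ hx =>
    simpa using mul_mul_mem_of_forall_single _ (x := x) (D := y) (y := 1)
      fun u _ => by simpa [← one_def] using hconj x hx 1 u

variable [LinearOrder X]

def IsMonicAt (f : FreeAlg k X) (t : FreeMonoid X) : Prop :=
  f.coeff t = 1 ∧ ∀ u ∈ f.coeff.support, u ≤ t

theorem IsMonicAt.single_mul_mul_single {f : FreeAlg k X} {t : FreeMonoid X} (hf : IsMonicAt f t)
    (a b : FreeMonoid X) : IsMonicAt (single a 1 * f * single b 1) (a * t * b) := by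
  classical
  refine ⟨by simp [coeff_mul_single_mul, coeff_single_mul_mul, hf.1], fun u hu => ?_⟩
  obtain ⟨v, hv, rfl⟩ := Finset.mem_image.1 (support_coeff_mul_single_subset _ _ _ hu)
  obtain ⟨w, hw, rfl⟩ := Finset.mem_image.1 (support_coeff_single_mul_subset _ _ _ hv)
  exact (strictMono_mul_mul a b).monotone (hf.2 w hw)

theorem isMonicAt_single (t : FreeMonoid X) : IsMonicAt (single t (1 : k)) t := by
  classical
  refine ⟨by simp [coeff_single], fun u hu => ?_⟩
  rw [coeff_single] at hu
  exact (Finset.mem_singleton.1 (Finsupp.support_single_subset hu)).le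

theorem lt_of_mem_support_sub {f f' : FreeAlg k X} {w : FreeMonoid X}
    (hf : ∀ u ∈ f.coeff.support, u ≤ w) (hf' : ∀ u ∈ f'.coeff.support, u ≤ w)
    (hc : f.coeff w = f'.coeff w) {u : FreeMonoid X} (hu : u ∈ (f - f').coeff.support) : u < w := by
  classical
  rw [coeff_sub] at hu
  refine lt_of_le_of_ne ?_ fun huw => Finsupp.mem_support_iff.1 hu (by simp [huw, hc])
  rcases Finset.mem_union.1 (Finsupp.support_sub hu) with hu | hu
  exacts [hf u hu, hf' u hu]

theorem isLeadingMonomial_iff {f : FreeAlg k X} {w : FreeMonoid X} :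
    IsLeadingMonomial k X f w ↔ w ∈ f.coeff.support ∧ ∀ u ∈ f.coeff.support, u ≤ w := by
  simp only [IsLeadingMonomial, degLexLT_iff_lt]
  refine and_congr_right fun _ => forall₂_congr fun u _ => ?_
  rw [le_iff_lt_or_eq, or_iff_not_imp_right]

theorem exists_isLeadingMonomial {f : FreeAlg k X} (hf : f ≠ 0) :
    ∃ w, IsLeadingMonomial k X f w := by
  have hs : f.coeff.support.Nonempty := by simpa [coeff_inj] using hf
  exact ⟨_, isLeadingMonomial_iff.2 ⟨Finset.max'_mem _ hs, fun u hu => Finset.le_max' _ u hu⟩⟩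

theorem coeff_eq_zero_of_mem_reducerSpan (hg : ∀ t ∈ O, IsMonicAt (g t) t)
    {s : Set (FreeMonoid X)} {x : FreeAlg k X} (hx : x ∈ reducerSpan g O s) {w : FreeMonoid X}
    (hw : ∀ u ∈ s, u < w) : x.coeff w = 0 := by
  induction hx using Submodule.span_induction with
  | mem x hx =>
    obtain ⟨t, ht, a, b, hs, rfl⟩ := hx
    exact Finsupp.notMem_support_iff.1 fun hmem =>
      (((hg t ht).single_mul_mul_single a b).2 w hmem).not_gt (hw _ hs)
  | zero => rfl
  | add x y _ _ hx hy => simp [coeff_add, hx, hy]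
  | smul c x _ hx => simp [hx]

theorem eq_zero_or_exists_mem_reducerSpan_Iic {s : Set (FreeMonoid X)} {x : FreeAlg k X}
    (hx : x ∈ reducerSpan g O s) : x = 0 ∨ ∃ V ∈ s, x ∈ reducerSpan g O (Set.Iic V) := by
  induction hx using Submodule.span_induction with
  | mem x hx =>
    obtain ⟨t, ht, a, b, hs, rfl⟩ := hx
    exact Or.inr ⟨_, hs, single_mul_mul_single_mem_reducerSpan ht (Set.mem_Iic.2 le_rfl)⟩
  | zero => exact Or.inl rfl
  | add x y _ _ hx hy =>
    rcases hx with rfl | ⟨V, hV, hx⟩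
    · simpa using hy
    rcases hy with rfl | ⟨W, hW, hy⟩
    · simpa using Or.inr ⟨V, hV, hx⟩
    have hVW : max V W ∈ s := by rcases max_choice V W with h | h <;> rw [h] <;> assumption
    refine Or.inr ⟨max V W, hVW, add_mem ?_ ?_⟩
    · exact reducerSpan_mono (Set.Iic_subset_Iic.2 (le_max_left V W)) hx
    · exact reducerSpan_mono (Set.Iic_subset_Iic.2 (le_max_right V W)) hy
  | smul c x _ hx =>
    rcases hx with rfl | ⟨V, hV, hx⟩
    · simp
    · exact Or.inr ⟨V, hV, Submodule.smul_mem _ c hx⟩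

theorem sub_mem_reducerSpan_Iio_of_disjoint (hg : ∀ t ∈ O, IsMonicAt (g t) t)
    {t₁ t₂ : FreeMonoid X} (ht₁ : t₁ ∈ O) (ht₂ : t₂ ∈ O) (a c b : FreeMonoid X) :
    single a 1 * g t₁ * single (c * t₂ * b) 1 - single (a * t₁ * c) 1 * g t₂ * single b 1 ∈
      reducerSpan g O (Set.Iio (a * t₁ * c * t₂ * b)) := by
  have hD : ∀ t ∈ O, ∀ u ∈ (single t 1 - g t).coeff.support, u < t := fun t ht u hu =>
    lt_of_mem_support_sub (isMonicAt_single t).2 (hg t ht).2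
      ((isMonicAt_single t).1.trans (hg t ht).1.symm) hu
  have e : single a 1 * g t₁ * single (c * t₂ * b) 1 - single (a * t₁ * c) 1 * g t₂ * single b 1 =
      single a 1 * g t₁ * single c 1 * (single t₂ 1 - g t₂) * single b 1 -
        single a 1 * (single t₁ 1 - g t₁) * (single c 1 * g t₂ * single b 1) := by
    simp only [single_mul_one, mul_sub, sub_mul, mul_assoc]
    abel
  rw [e]
  refine sub_mem (mul_mul_mem_of_forall_single _ fun u hu => ?_)
    (mul_mul_mem_of_forall_single _ fun u hu => ?_)
  · have hlt : a * t₁ * (c * u * b) < a * t₁ * c * t₂ * b := by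
      simpa only [mul_assoc] using strictMono_mul_mul (a * t₁ * c) b (hD t₂ ht₂ u hu)
    convert single_mul_mul_single_mem_reducerSpan (g := g) ht₁ (Set.mem_Iio.2 hlt) using 1
    simp only [single_mul_one, mul_assoc]
  · have hlt : a * u * c * t₂ * b < a * t₁ * c * t₂ * b := by
      simpa only [mul_assoc] using strictMono_mul_mul a (c * t₂ * b) (hD t₁ ht₁ u hu)
    convert single_mul_mul_single_mem_reducerSpan (g := g) ht₂ (Set.mem_Iio.2 hlt) using 1
    simp only [single_mul_one, mul_assoc]

/-- The length bound says that the two occurrences overlap or touch and together cover the word: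
these are the overlap and inclusion ambiguities. -/
def AmbiguitiesResolve (g : FreeMonoid X → FreeAlg k X) (O : Set (FreeMonoid X)) : Prop :=
  ∀ t₁ ∈ O, ∀ t₂ ∈ O, ∀ a₁ b₁ a₂ b₂ : FreeMonoid X, a₁ * t₁ * b₁ = a₂ * t₂ * b₂ →
    (a₁ * t₁ * b₁).length ≤ t₁.length + t₂.length →
    single a₁ 1 * g t₁ * single b₁ 1 - single a₂ 1 * g t₂ * single b₂ 1 ∈
      reducerSpan g O (Set.Iio (a₁ * t₁ * b₁))

theorem sub_mem_reducerSpan_Iio (hg : ∀ t ∈ O, IsMonicAt (g t) t)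
    (hres : AmbiguitiesResolve g O) {t₁ t₂ : FreeMonoid X} (ht₁ : t₁ ∈ O) (ht₂ : t₂ ∈ O)
    {a₁ b₁ a₂ b₂ : FreeMonoid X} (h : a₁ * t₁ * b₁ = a₂ * t₂ * b₂) :
    single a₁ 1 * g t₁ * single b₁ 1 - single a₂ 1 * g t₂ * single b₂ 1 ∈
      reducerSpan g O (Set.Iio (a₁ * t₁ * b₁)) := by
  rcases occurrence_cases h with ⟨c, rfl, rfl⟩ | ⟨c, rfl, rfl⟩ |
    ⟨a, b, a₁', b₁', a₂', b₂', rfl, rfl, rfl, rfl, h', hlen⟩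
  · simpa only [mul_assoc] using sub_mem_reducerSpan_Iio_of_disjoint hg ht₁ ht₂ a₁ c b₂
  · rw [h, ← neg_sub]
    simpa only [mul_assoc] using neg_mem (sub_mem_reducerSpan_Iio_of_disjoint hg ht₂ ht₁ a₂ c b₁)
  · have := single_mul_mul_single_mem_reducerSpan_image (hres t₁ ht₁ t₂ ht₂ _ _ _ _ h' hlen) a b
    simp only [single_mul_one, mul_sub, sub_mul, mul_assoc] at this ⊢
    refine reducerSpan_mono ?_ this
    rintro _ ⟨w, hw, rfl⟩
    simpa only [Set.mem_Iio, mul_assoc] using strictMono_mul_mul a b hw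

theorem mem_reducerSpan_Iio_of_coeff_eq_zero (hg : ∀ t ∈ O, IsMonicAt (g t) t)
    (hres : AmbiguitiesResolve g O) {V : FreeMonoid X} {x : FreeAlg k X}
    (hx : x ∈ reducerSpan g O (Set.Iic V)) (h0 : x.coeff V = 0) :
    x ∈ reducerSpan g O (Set.Iio V) := by
  by_cases hV : ∃ t₀ ∈ O, ∃ a₀ b₀, a₀ * t₀ * b₀ = V
  swap
  · refine Submodule.span_mono ?_ hx
    rintro _ ⟨t, ht, a, b, hle, rfl⟩
    exact ⟨t, ht, a, b, (Set.mem_Iic.1 hle).lt_of_ne fun h => hV ⟨t, ht, a, b, h⟩, rfl⟩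
  obtain ⟨t₀, ht₀, a₀, b₀, rfl⟩ := hV
  -- All generators at the word `V` agree modulo `reducerSpan g O (Set.Iio V)`, so the linear map
  -- `y ↦ y - y_V • e₀` sends `reducerSpan g O (Set.Iic V)` into it.
  set e₀ := single a₀ 1 * g t₀ * single b₀ 1
  suffices ∀ y ∈ reducerSpan g O (Set.Iic (a₀ * t₀ * b₀)),
      y - y.coeff (a₀ * t₀ * b₀) • e₀ ∈ reducerSpan g O (Set.Iio (a₀ * t₀ * b₀)) by
    simpa [h0] using this x hx
  intro y hy
  induction hy using Submodule.span_induction with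
  | mem y hy =>
    obtain ⟨t, ht, a, b, hle, rfl⟩ := hy
    have he := (hg t ht).single_mul_mul_single a b
    rcases (Set.mem_Iic.1 hle).lt_or_eq with hlt | heq
    · rw [Finsupp.notMem_support_iff.1 fun hV => (he.2 _ hV).not_gt hlt, zero_smul, sub_zero]
      exact single_mul_mul_single_mem_reducerSpan ht hlt
    · rw [← heq, he.1, one_smul]
      exact sub_mem_reducerSpan_Iio hg hres ht ht₀ heq
  | zero => simp
  | add y z _ _ hy hz =>
    convert add_mem hy hz using 1
    simp only [coeff_add, Finsupp.add_apply, add_smul]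
    abel
  | smul c y _ hy =>
    convert Submodule.smul_mem _ c hy using 1
    simp [smul_sub, smul_smul]

theorem mem_reducerSpan_Iic_of_forall_le [Finite X] (hg : ∀ t ∈ O, IsMonicAt (g t) t)
    (hres : AmbiguitiesResolve g O) {x : FreeAlg k X} (hx : x ∈ reducerSpan g O Set.univ)
    {U : FreeMonoid X} (hU : ∀ u ∈ x.coeff.support, u ≤ U) : x ∈ reducerSpan g O (Set.Iic U) := by
  suffices ∀ V, x ∈ reducerSpan g O (Set.Iic V) → x ∈ reducerSpan g O (Set.Iic U) by
    rcases eq_zero_or_exists_mem_reducerSpan_Iic hx with rfl | ⟨V, -, hV⟩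
    exacts [zero_mem _, this V hV]
  intro V hV
  induction V using WellFoundedLT.induction with
  | _ V ih =>
  rcases le_or_gt V U with hVU | hUV
  · exact reducerSpan_mono (Set.Iic_subset_Iic.2 hVU) hV
  have h0 : x.coeff V = 0 := Finsupp.notMem_support_iff.1 fun h => (hU V h).not_gt hUV
  rcases eq_zero_or_exists_mem_reducerSpan_Iic
    (mem_reducerSpan_Iio_of_coeff_eq_zero hg hres hV h0) with rfl | ⟨V', hV', hx'⟩
  exacts [zero_mem _, ih V' hV' hx']

variable {I : TwoSidedIdeal (FreeAlg k X)}

theorem isReducible_iff_exists_isMonicAt {w : FreeMonoid X} :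
    IsReducible k X I w ↔ ∃ f ∈ I, IsMonicAt f w := by
  refine ⟨fun ⟨f, hfI, hf⟩ => ?_, fun ⟨f, hfI, hf⟩ => ⟨f, hfI, ?_⟩⟩
  · have hc : f.coeff w ≠ 0 := Finsupp.mem_support_iff.1 hf.1
    refine ⟨(f.coeff w)⁻¹ • f, ?_, by simp [hc], fun u hu => ?_⟩
    · rw [Algebra.smul_def]; exact I.mul_mem_left _ _ hfI
    · exact (isLeadingMonomial_iff.1 hf).2 u (Finsupp.support_smul hu)
  · exact isLeadingMonomial_iff.2 ⟨by simp [hf.1], hf.2⟩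

theorem IsReducible.exists_isObstructionA {w : FreeMonoid X} (hw : IsReducible k X I w) :
    ∃ t, IsObstructionA k X I t ∧ t.toList <:+: w.toList := by
  induction hn : w.length using Nat.strong_induction_on generalizing w with
  | _ n ih =>
  by_cases hmin : ∀ u : FreeMonoid X, u.toList <:+: w.toList → u ≠ w → ¬ IsReducible k X I u
  · exact ⟨w, ⟨hw, hmin⟩, List.infix_refl _⟩
  push Not at hmin
  obtain ⟨u, hu, hne, hred⟩ := hmin
  obtain ⟨t, ht, htu⟩ := ih u.length (hn ▸ length_lt_of_isInfix hu hne) hred rfl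
  exact ⟨t, ht, htu.trans hu⟩

theorem mem_reducerSpan_Iio_of_mem [Finite X] (hgI : ∀ t ∈ O, g t ∈ I) (hg : ∀ t ∈ O, IsMonicAt (g t) t) {V : FreeMonoid X}
    (hO : ∀ t, IsObstructionA k X I t → t < V → t ∈ O) {h : FreeAlg k X} (hh : h ∈ I)
    (hV : ∀ u ∈ h.coeff.support, u < V) : h ∈ reducerSpan g O (Set.Iio V) := by
  induction V using WellFoundedLT.induction generalizing h with
  | _ V ih =>
  rcases eq_or_ne h 0 with rfl | h0
  · exact zero_mem _
  obtain ⟨w, hw⟩ := exists_isLeadingMonomial h0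
  obtain ⟨t, ht, htw⟩ := IsReducible.exists_isObstructionA ⟨h, hh, hw⟩
  have hwV : w < V := hV w (isLeadingMonomial_iff.1 hw).1
  have htO : t ∈ O := hO t ht ((le_of_isInfix htw).trans_lt hwV)
  obtain ⟨a, b, rfl⟩ := isInfix_iff.1 htw
  have he := (hg t htO).single_mul_mul_single a b
  set e := single a 1 * g t * single b 1
  have hrest : h - h.coeff (a * t * b) • e ∈ reducerSpan g O (Set.Iio (a * t * b)) := by
    refine ih _ hwV (fun t' ht' hlt => hO t' ht' (hlt.trans hwV))
      (I.sub_mem hh ?_) fun u hu => lt_of_mem_support_sub (isLeadingMonomial_iff.1 hw).2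
        (fun u hu => he.2 u (Finsupp.support_smul hu)) (by simp [he.1]) hu
    rw [Algebra.smul_def]
    exact I.mul_mem_left _ _ (I.mul_mem_right _ _ (I.mul_mem_left _ _ (hgI t htO)))
  rw [← sub_add_cancel h (h.coeff (a * t * b) • e)]
  exact add_mem (reducerSpan_mono (Set.Iio_subset_Iio hwV.le) hrest)
    (Submodule.smul_mem _ _ (single_mul_mul_single_mem_reducerSpan htO hwV))

theorem ambiguitiesResolve [Finite X] (hgI : ∀ t ∈ O, g t ∈ I) (hg : ∀ t ∈ O, IsMonicAt (g t) t)
    {o : FreeMonoid X} (hO : ∀ t, IsObstructionA k X I t → t < o → t ∈ O)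
    (hlen : ∀ t₁ ∈ O, ∀ t₂ ∈ O, t₁.length + t₂.length < o.length) : AmbiguitiesResolve g O := by
  intro t₁ ht₁ t₂ ht₂ a₁ b₁ a₂ b₂ he hl
  have hmon₁ := (hg t₁ ht₁).single_mul_mul_single a₁ b₁
  have hmon₂ := (hg t₂ ht₂).single_mul_mul_single a₂ b₂
  rw [← he] at hmon₂
  have hlt : a₁ * t₁ * b₁ < o := lt_of_length_lt (hl.trans_lt (hlen t₁ ht₁ t₂ ht₂))
  refine mem_reducerSpan_Iio_of_mem hgI hg (fun t ht htV => hO t ht (htV.trans hlt))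
    (I.sub_mem ?_ ?_) fun u hu =>
      lt_of_mem_support_sub hmon₁.2 hmon₂.2 (hmon₁.1.trans hmon₂.1.symm) hu
  exacts [I.mul_mem_right _ _ (I.mul_mem_left _ _ (hgI t₁ ht₁)),
    I.mul_mem_right _ _ (I.mul_mem_left _ _ (hgI t₂ ht₂))]

theorem not_isObstructionA_of_span [Finite X] {S : Set (FreeAlg k X)}
    (hspan : I = TwoSidedIdeal.span S) {o : FreeMonoid X}
    (hS : ∀ f ∈ S, ∀ u ∈ f.coeff.support, u < o)
    (hlen : ∀ t₁ t₂, IsObstructionA k X I t₁ → IsObstructionA k X I t₂ → t₁ < o → t₂ < o →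
      t₁.length + t₂.length < o.length) :
    ¬ IsObstructionA k X I o := by
  intro ho
  set O := {t | IsObstructionA k X I t ∧ t < o}
  have hmonic : ∀ t ∈ O, ∃ f ∈ I, IsMonicAt f t := fun t ht =>
    isReducible_iff_exists_isMonicAt.1 ht.1.1
  choose! g hgI hg using hmonic
  have hres : AmbiguitiesResolve g O :=
    ambiguitiesResolve hgI hg (fun t ht hto => ⟨ht, hto⟩)
      fun t₁ ht₁ t₂ ht₂ => hlen t₁ t₂ ht₁.1 ht₂.1 ht₁.2 ht₂.2
  have hI : ∀ x ∈ I, x ∈ reducerSpan g O Set.univ := by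
    intro x hx
    rw [hspan] at hx
    refine mem_reducerSpan_univ_of_mem_span (fun f hf => ?_) hx
    have hfI : f ∈ I := hspan ▸ TwoSidedIdeal.subset_span hf
    exact reducerSpan_mono (Set.subset_univ _)
      (mem_reducerSpan_Iio_of_mem hgI hg (fun t ht hto => ⟨ht, hto⟩) hfI (hS f hf))
  -- `o` is not of the form `a * t * b` with `t ∈ O`, since `t` would be a reducible proper factor.
  have hIic : reducerSpan g O (Set.Iic o) ≤ reducerSpan g O (Set.Iio o) := by
    refine Submodule.span_mono ?_
    rintro _ ⟨t, ht, a, b, hle, rfl⟩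
    refine ⟨t, ht, a, b, (Set.mem_Iic.1 hle).lt_of_ne fun h => ?_, rfl⟩
    exact ho.2 t (isInfix_iff.2 ⟨a, b, h⟩) ht.2.ne ht.1.1
  obtain ⟨h, hhI, hlm⟩ := ho.1
  rw [isLeadingMonomial_iff] at hlm
  have hh := hIic (mem_reducerSpan_Iic_of_forall_le hg hres (hI h hhI) hlm.2)
  exact Finsupp.mem_support_iff.1 hlm.1 (coeff_eq_zero_of_mem_reducerSpan hg hh fun _ => id)

theorem length_lt_of_isObstructionA [Finite X] {S : Set (FreeAlg k X)} {m N : ℕ}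
    (hspan : I = TwoSidedIdeal.span S) (hdeg : ∀ f ∈ S, ∀ w ∈ f.coeff.support, w.length ≤ m)
    (hmN : m ≤ N) (hgap : ∀ w, IsObstructionA k X I w → ¬ (N ≤ w.length ∧ w.length ≤ 2 * N))
    {w : FreeMonoid X} (hw : IsObstructionA k X I w) : w.length < N := by
  suffices hshort : ∀ o, IsObstructionA k X I o → o.length ≤ 2 * N by
    by_contra h
    exact hgap w hw ⟨not_lt.1 h, hshort w hw⟩
  by_contra! hlong
  obtain ⟨o, ⟨ho, hoN⟩, hmin⟩ := wellFounded_lt.has_min _ hlong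
  have hbelow : ∀ t, IsObstructionA k X I t → t < o → t.length < N := fun t ht hto => by
    by_contra h
    exact hgap t ht ⟨not_lt.1 h, not_lt.1 fun h' => hmin t ⟨ht, h'⟩ hto⟩
  refine not_isObstructionA_of_span hspan (fun f hf u hu => lt_of_length_lt ?_)
    (fun t₁ t₂ h₁ h₂ ho₁ ho₂ => ?_) ho
  · have := hdeg f hf u hu
    omega
  · have := hbelow t₁ h₁ ho₁
    have := hbelow t₂ h₂ ho₂
    omega

theorem finite_setOf_isObstructionA [Finite X] {N : ℕ}
    (h : ∀ w, IsObstructionA k X I w → w.length < N) : {w | IsObstructionA k X I w}.Finite :=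
  ((List.finite_length_le X N).image ofList).subset fun w hw => ⟨w.toList, (h w hw).le, rfl⟩

theorem exists_isGroebnerBasis_of_finite (hfin : {w | IsObstructionA k X I w}.Finite) :
    ∃ G : Finset (FreeAlg k X), IsGroebnerBasis k X I G := by
  classical
  choose! gen hgenI hgen using fun w (hw : IsObstructionA k X I w) => hw.1
  refine ⟨hfin.toFinset.image gen, fun x hx => ?_, fun f hf hf0 => ?_⟩
  · obtain ⟨w, hw, rfl⟩ := Finset.mem_image.1 hx
    exact hgenI w (hfin.mem_toFinset.1 hw)
  · obtain ⟨wf, hwf⟩ := exists_isLeadingMonomial hf0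
    obtain ⟨t, ht, htf⟩ := IsReducible.exists_isObstructionA ⟨f, hf, hwf⟩
    exact ⟨gen t, Finset.mem_image.2 ⟨t, hfin.mem_toFinset.2 ht, rfl⟩, wf, t, hwf, hgen t ht, htf⟩

end FreeAlg

theorem finite_groebner_of_obstruction_gap (k : Type) [Field k]
    (X : Type) [Fintype X] [LinearOrder X]
    (I : TwoSidedIdeal (FreeAlg k X)) (S : Finset (FreeAlg k X)) (m N : ℕ)
    (hspan : I = TwoSidedIdeal.span (S : Set (FreeAlg k X)))
    (hdeg : ∀ f ∈ S, ∀ w ∈ f.coeff.support, FreeMonoid.length w ≤ m)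
    (hmN : m ≤ N)
    (hgap : ∀ w : FreeMonoid X, IsObstructionA k X I w →
      ¬ (N ≤ w.length ∧ w.length ≤ 2 * N)) :
    (∃ G : Finset (FreeAlg k X), IsGroebnerBasis k X I (G : Set (FreeAlg k X))) ∧
      {w : FreeMonoid X | IsObstructionA k X I w}.Finite := by
  have hfin := FreeAlg.finite_setOf_isObstructionA fun w hw =>
    FreeAlg.length_lt_of_isObstructionA hspan hdeg hmN hgap hw
  exact ⟨FreeAlg.exists_isGroebnerBasis_of_finite hfin, hfin⟩
end
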